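/- Let d ≥ 2 be an integer and let 0 < t < 1. Then σ_t ≥ (√d / (2·√(2π))) · ∫_t^1 (1 − x²)^{d/2} dx. -/

import Mathlib

set_option maxHeartbeats 1000000
open MeasureTheory Metric Set
open scoped Pointwise ENNReal

lemma aux_slice (m : ℕ) (r : ℝ) :
    (volume : Measure (Fin (m+1) → ℝ)) {y | ∑ j, (y j)^2 < r} =
      ENNReal.ofReal (Real.sqrt r ^ (m+1)) *
        (volume : Measure (Fin (m+1) → ℝ)) {y | ∑ j, (y j)^2 < 1} := by
  rcases le_or_gt r 0 with hr | hr
  · have h1 : {y : Fin (m+1) → ℝ | ∑ j, (y j)^2 < r} = ∅ := by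
      ext y
      simp only [mem_setOf_eq, mem_empty_iff_false, iff_false, not_lt]
      exact hr.trans (Finset.sum_nonneg fun j _ => sq_nonneg _)
    rw [h1, Real.sqrt_eq_zero'.mpr hr]
    simp
  · have hs : 0 < Real.sqrt r := Real.sqrt_pos.2 hr
    have h1 : {y : Fin (m+1) → ℝ | ∑ j, (y j)^2 < r} =
        Real.sqrt r • {y : Fin (m+1) → ℝ | ∑ j, (y j)^2 < 1} := by
      ext y
      rw [mem_smul_set_iff_inv_smul_mem₀ hs.ne']
      simp only [mem_setOf_eq, Pi.smul_apply, smul_eq_mul]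
      have : ∀ j : Fin (m+1), ((Real.sqrt r)⁻¹ * y j)^2 = (Real.sqrt r ^ 2)⁻¹ * (y j)^2 :=
        fun j => by ring
      simp only [this, ← Finset.mul_sum, Real.sq_sqrt hr.le]
      rw [inv_mul_lt_iff₀ hr, mul_one]
    rw [h1, Measure.addHaar_smul_of_nonneg _ (Real.sqrt_nonneg r),
      Module.finrank_fin_fun]

lemma aux_B_pos (m : ℕ) : 0 < (volume : Measure (Fin m → ℝ)) {y | ∑ j, (y j)^2 < 1} := by
  refine (isOpen_lt (by fun_prop) continuous_const).measure_pos _ ⟨0, ?_⟩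
  simp

lemma aux_B_lt_top (m : ℕ) :
    (volume : Measure (Fin m → ℝ)) {y | ∑ j, (y j)^2 < 1} < ⊤ := by
  refine lt_of_le_of_lt (measure_mono (fun y hy => ?_))
    (measure_closedBall_lt_top (x := (0 : Fin m → ℝ)) (r := 1))
  simp only [mem_setOf_eq] at hy
  rw [mem_closedBall_zero_iff]
  rcases isEmpty_or_nonempty (Fin m) with h | h
  · have : y = 0 := Subsingleton.elim _ _
    simp [this]
  · rw [pi_norm_le_iff_of_nonneg zero_le_one]
    intro i
    rw [Real.norm_eq_abs, abs_le_one_iff_mul_self_le_one, ← sq]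
    exact le_trans (Finset.single_le_sum (fun j _ => sq_nonneg (y j)) (Finset.mem_univ i)) hy.le

lemma aux_gauss_bound (m : ℕ) (s : ℝ) :
    Real.sqrt (1 - s^2) ^ m ≤ Real.exp (-(m * s^2) / 2) := by
  have h1 : Real.sqrt (1 - s^2) ≤ Real.exp (-s^2 / 2) := by
    rw [show -s^2/2 = (-s^2)/2 by ring, Real.exp_half]
    exact Real.sqrt_le_sqrt (by linarith [Real.add_one_le_exp (-s^2)])
  calc Real.sqrt (1 - s^2) ^ m ≤ Real.exp (-s^2/2) ^ m :=
        pow_le_pow_left₀ (Real.sqrt_nonneg _) h1 m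
    _ = Real.exp (-(m * s^2)/2) := by
        rw [← Real.exp_nat_mul]; ring_nf

/-- The normalized surface measure of the spherical cap
`C_t(u) = {w ∈ S^{d-1} : ⟨w, u⟩ ≥ t}` on the Euclidean unit sphere in `ℝ^d`. -/
noncomputable def capSigma (d : ℕ) (t : ℝ) (u : EuclideanSpace ℝ (Fin d)) : ℝ :=
  (((MeasureTheory.volume : MeasureTheory.Measure (EuclideanSpace ℝ (Fin d))).toSphere
      {w : Metric.sphere (0 : EuclideanSpace ℝ (Fin d)) 1 |
        t ≤ (inner ℝ (w : EuclideanSpace ℝ (Fin d)) u : ℝ)}) /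
    ((MeasureTheory.volume : MeasureTheory.Measure (EuclideanSpace ℝ (Fin d))).toSphere
      Set.univ)).toReal

/-- For `d ≥ 2` and `0 < t < 1`,
`σ_t ≥ (√d / (2√(2π))) · ∫_t^1 (1 - x²)^{d/2} dx`. -/
theorem capSigma_ge_integral
    (d : ℕ) (hd : 2 ≤ d) (t : ℝ) (ht0 : 0 < t) (ht1 : t < 1) :
    (Real.sqrt d / (2 * Real.sqrt (2 * Real.pi))) *
        ∫ x in t..1, (1 - x ^ 2) ^ ((d : ℝ) / 2) ≤
      capSigma d t (EuclideanSpace.single (⟨0, by omega⟩ : Fin d) 1) := by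
  obtain ⟨n, rfl⟩ : ∃ n, d = n + 2 := ⟨d - 2, by omega⟩
  set i0 : Fin (n + 2) := ⟨0, by omega⟩ with hi0
  set E := EuclideanSpace ℝ (Fin (n + 2))
  set u : E := EuclideanSpace.single i0 1 with hu
  set cap : Set (Metric.sphere (0 : E) 1) :=
    {w : Metric.sphere (0 : E) 1 | t ≤ (inner ℝ (w : E) u : ℝ)} with hcap
  -- the measurable equivalence
  set e : E ≃ᵐ ℝ × (Fin (n + 1) → ℝ) :=
    (MeasurableEquiv.toLp 2 (Fin (n + 2) → ℝ)).symm.trans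
      (MeasurableEquiv.piFinSuccAbove (fun _ : Fin (n + 2) => ℝ) i0) with he_def
  have he : MeasurePreserving e volume volume :=
    (EuclideanSpace.volume_preserving_symm_measurableEquiv_toLp (Fin (n + 2))).trans
      (volume_preserving_piFinSuccAbove (fun _ : Fin (n + 2) => ℝ) i0)
  have he_apply : ∀ x : E, e x = (x i0, fun j => x (i0.succAbove j)) := fun x => rfl
  -- the sets
  set A' : Set (ℝ × (Fin (n + 1) → ℝ)) :=
    {p | t ≤ p.1 ∧ p.1 ^ 2 + ∑ j, (p.2 j) ^ 2 < 1} with hA'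
  set B' : Set (ℝ × (Fin (n + 1) → ℝ)) :=
    {p | p.1 ^ 2 + ∑ j, (p.2 j) ^ 2 < 1} with hB'
  have hc : Continuous fun p : ℝ × (Fin (n + 1) → ℝ) => p.1 ^ 2 + ∑ j, (p.2 j) ^ 2 := by
    fun_prop
  have hB'm : MeasurableSet B' := (isOpen_lt hc continuous_const).measurableSet
  have hA'm : MeasurableSet A' :=
    ((isClosed_le continuous_const continuous_fst).measurableSet).inter hB'm
  -- norms and sums
  have hsum : ∀ x : E, (x i0) ^ 2 + ∑ j, (x (i0.succAbove j)) ^ 2 = ‖x‖ ^ 2 := by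
    intro x
    rw [EuclideanSpace.norm_eq, Real.sq_sqrt (Finset.sum_nonneg fun i _ => sq_nonneg _)]
    simp only [Real.norm_eq_abs, sq_abs]
    exact (Fin.sum_univ_succAbove (fun i => x i ^ 2) i0).symm
  have hball : e ⁻¹' B' = ball (0 : E) 1 := by
    ext x
    simp only [mem_preimage, he_apply, hB', mem_setOf_eq, mem_ball_zero_iff, hsum x]
    constructor
    · intro h; nlinarith [norm_nonneg x]
    · intro h; nlinarith [norm_nonneg x]
  have hA : e ⁻¹' A' = {x : E | t ≤ x i0} ∩ ball (0 : E) 1 := by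
    ext x
    simp only [mem_preimage, he_apply, hA', mem_setOf_eq, mem_inter_iff, mem_ball_zero_iff,
      hsum x]
    constructor
    · rintro ⟨h1, h2⟩
      exact ⟨h1, by nlinarith [norm_nonneg x]⟩
    · rintro ⟨h1, h2⟩
      exact ⟨h1, by nlinarith [norm_nonneg x]⟩
  -- slice function
  set g : ℝ → ℝ := fun s => Real.sqrt (1 - s ^ 2) ^ (n + 1) with hg
  have hgc : Continuous g := (Real.continuous_sqrt.comp (continuous_const.sub (continuous_pow 2))).pow _
  have hg0 : ∀ s, 0 ≤ g s := fun s => pow_nonneg (Real.sqrt_nonneg _) _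
  have hgm : Measurable fun s => ENNReal.ofReal (g s) :=
    ENNReal.measurable_ofReal.comp hgc.measurable
  set B := (volume : Measure (Fin (n + 1) → ℝ)) {y | ∑ j, (y j) ^ 2 < 1} with hB
  have hsliceB : ∀ s : ℝ, (volume : Measure (Fin (n+1) → ℝ)) (Prod.mk s ⁻¹' B')
      = ENNReal.ofReal (g s) * B := by
    intro s
    have h1 : Prod.mk s ⁻¹' B' = {y : Fin (n+1) → ℝ | ∑ j, (y j)^2 < 1 - s^2} := by
      ext y
      simp only [mem_preimage, hB', mem_setOf_eq]
      constructor <;> intro h <;> linarith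
    rw [h1, aux_slice]
  have hsliceA : ∀ s : ℝ, (volume : Measure (Fin (n+1) → ℝ)) (Prod.mk s ⁻¹' A')
      = Set.indicator (Ici t) (fun s => ENNReal.ofReal (g s) * B) s := by
    intro s
    rcases le_or_gt t s with hs | hs
    · rw [indicator_of_mem (mem_Ici.2 hs)]
      have h1 : Prod.mk s ⁻¹' A' = {y : Fin (n+1) → ℝ | ∑ j, (y j)^2 < 1 - s^2} := by
        ext y
        simp only [mem_preimage, hA', mem_setOf_eq]
        constructor
        · intro h; linarith [h.2]
        · intro h; exact ⟨hs, by linarith⟩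
      rw [h1, aux_slice]
    · rw [indicator_of_notMem (by simpa using hs.not_ge)]
      have h1 : Prod.mk s ⁻¹' A' = ∅ := by
        ext y
        simp only [mem_preimage, hA', mem_setOf_eq, mem_empty_iff_false, iff_false, not_and]
        intro h; linarith
      rw [h1]; simp
  -- volumes
  have hvolB : volume (ball (0 : E) 1) = (∫⁻ s : ℝ, ENNReal.ofReal (g s)) * B := by
    rw [← hball, he.measure_preimage hB'm.nullMeasurableSet, Measure.volume_eq_prod _ _,
      Measure.prod_apply hB'm]
    simp_rw [hsliceB]
    rw [lintegral_mul_const _ hgm]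
  have hvolA : volume (e ⁻¹' A') = (∫⁻ s in Ici t, ENNReal.ofReal (g s)) * B := by
    rw [he.measure_preimage hA'm.nullMeasurableSet, Measure.volume_eq_prod _ _,
      Measure.prod_apply hA'm]
    rw [lintegral_congr hsliceA, lintegral_indicator measurableSet_Ici,
      lintegral_mul_const _ hgm]
  -- inner products
  have hinner : ∀ x : E, (inner ℝ x u : ℝ) = x i0 := by
    intro x
    rw [hu, EuclideanSpace.inner_single_right]
    simp
  have capm : MeasurableSet cap := by
    have : IsClosed cap :=
      isClosed_le continuous_const (Continuous.inner continuous_subtype_val continuous_const)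
    exact this.measurableSet
  -- the preimage of A' is contained in the cone over the cap
  have hsub : e ⁻¹' A' ⊆ Ioo (0:ℝ) 1 • ((↑) '' cap : Set E) := by
    rw [hA]
    rintro x ⟨hx1, hx2⟩
    rw [mem_ball_zero_iff] at hx2
    simp only [mem_setOf_eq] at hx1
    have hx0 : 0 < ‖x‖ := by
      rw [norm_pos_iff]
      intro h0
      rw [h0] at hx1
      have : (0 : E) i0 = 0 := rfl
      rw [this] at hx1
      linarith
    have hw : ‖x‖⁻¹ • x ∈ sphere (0 : E) 1 := by
      simp [norm_smul, abs_of_pos (inv_pos.2 hx0), inv_mul_cancel₀ hx0.ne']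
    have hwc : (⟨‖x‖⁻¹ • x, hw⟩ : sphere (0 : E) 1) ∈ cap := by
      simp only [hcap, mem_setOf_eq, hinner]
      have h1 : 1 ≤ ‖x‖⁻¹ := (one_le_inv₀ hx0).2 hx2.le
      have h2 : (‖x‖⁻¹ • x) i0 = ‖x‖⁻¹ * x i0 := rfl
      rw [h2]
      nlinarith
    refine Set.mem_smul.2 ⟨‖x‖, ⟨hx0, hx2⟩, ‖x‖⁻¹ • x, ⟨⟨‖x‖⁻¹ • x, hw⟩, hwc, rfl⟩, ?_⟩
    exact smul_inv_smul₀ hx0.ne' x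
  -- toSphere estimates
  have hdim : Module.finrank ℝ E = n + 2 := finrank_euclideanSpace_fin
  have hScap : ((n + 2 : ℕ) : ℝ≥0∞) * volume (e ⁻¹' A') ≤
      (volume : Measure E).toSphere cap := by
    rw [Measure.toSphere_apply' _ capm, hdim]
    exact mul_le_mul_right (measure_mono hsub) _
  have hSuniv : (volume : Measure E).toSphere (univ : Set (sphere (0:E) 1)) =
      ((n + 2 : ℕ) : ℝ≥0∞) * volume (ball (0:E) 1) := by
    rw [Measure.toSphere_apply_univ, hdim]
  -- lintegral estimates
  have hnpos : (0:ℝ) < ((n:ℝ)+1)/2 := by positivity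
  have hL2 : (∫⁻ s : ℝ, ENNReal.ofReal (g s)) ≤
      ENNReal.ofReal (Real.sqrt (Real.pi / (((n:ℝ)+1)/2))) := by
    calc (∫⁻ s : ℝ, ENNReal.ofReal (g s))
        ≤ ∫⁻ s : ℝ, ENNReal.ofReal (Real.exp (-(((n:ℝ)+1)/2) * s^2)) := by
          refine lintegral_mono fun s => ENNReal.ofReal_le_ofReal ?_
          have h := aux_gauss_bound (n+1) s
          rw [show -(((n:ℝ)+1)/2) * s^2 = -(((n+1 : ℕ) : ℝ) * s^2)/2 by push_cast; ring]
          exact h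
      _ = ENNReal.ofReal (∫ s : ℝ, Real.exp (-(((n:ℝ)+1)/2) * s^2)) :=
          (ofReal_integral_eq_lintegral_ofReal (integrable_exp_neg_mul_sq hnpos)
            (Filter.Eventually.of_forall fun s => (Real.exp_pos _).le)).symm
      _ = _ := by rw [integral_gaussian]
  set I1 := ∫ x in t..1, (1 - x ^ 2) ^ (((n+2 : ℕ) : ℝ) / 2) with hI1
  have hI1nn : 0 ≤ I1 := by
    rw [hI1]
    apply intervalIntegral.integral_nonneg ht1.le
    intro x hx
    have hb : 0 ≤ 1 - x^2 := by nlinarith [hx.1, hx.2]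
    exact Real.rpow_nonneg hb _
  have hIoog : IntegrableOn g (Ioo t 1) volume :=
    ((hgc.continuousOn).integrableOn_compact isCompact_Icc).mono_set Ioo_subset_Icc_self
  have hrpc : Continuous fun x : ℝ => (1 - x^2) ^ (((n+2 : ℕ) : ℝ)/2) := by
    have h1 : Continuous fun z : ℝ => z ^ (((n+2 : ℕ) : ℝ)/2) := by
      rw [continuous_iff_continuousAt]
      exact fun z => Real.continuousAt_rpow_const z _ (Or.inr (by positivity))
    exact h1.comp (continuous_const.sub (continuous_pow 2))
  have hIoor : IntegrableOn (fun x : ℝ => (1 - x^2) ^ (((n+2 : ℕ) : ℝ)/2)) (Ioo t 1) volume :=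
    ((hrpc.continuousOn).integrableOn_compact isCompact_Icc).mono_set Ioo_subset_Icc_self
  have hptwise : ∀ x ∈ Ioo t 1, (1 - x^2) ^ (((n+2 : ℕ) : ℝ)/2) ≤ g x := by
    intro x hx
    have hx0 : 0 < 1 - x^2 := by nlinarith [hx.1, hx.2]
    have hx1 : 1 - x^2 ≤ 1 := by nlinarith [hx.1]
    have hgx : g x = (1 - x^2) ^ ((((n:ℝ))+1)/2) := by
      show Real.sqrt (1 - x^2) ^ (n+1) = _
      rw [← Real.rpow_natCast (Real.sqrt (1 - x^2)) (n+1), Real.sqrt_eq_rpow,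
        ← Real.rpow_mul hx0.le]
      push_cast
      ring_nf
    rw [hgx]
    apply Real.rpow_le_rpow_of_exponent_ge hx0 hx1
    push_cast
    linarith
  have hI1L1 : ENNReal.ofReal I1 ≤ ∫⁻ s in Ici t, ENNReal.ofReal (g s) := by
    have e2 : I1 ≤ ∫ x in Ioo t 1, g x := by
      rw [hI1, intervalIntegral.integral_of_le ht1.le,
        MeasureTheory.integral_Ioc_eq_integral_Ioo]
      exact setIntegral_mono_on hIoor hIoog measurableSet_Ioo hptwise
    calc ENNReal.ofReal I1 ≤ ENNReal.ofReal (∫ x in Ioo t 1, g x) :=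
          ENNReal.ofReal_le_ofReal e2
      _ = ∫⁻ x in Ioo t 1, ENNReal.ofReal (g x) :=
          ofReal_integral_eq_lintegral_ofReal hIoog
            (Filter.Eventually.of_forall fun s => hg0 s)
      _ ≤ _ := lintegral_mono_set (fun x hx => hx.1.le)
  -- the real constant inequality
  set c : ℝ := Real.sqrt ((n+2 : ℕ) : ℝ) / (2 * Real.sqrt (2 * Real.pi)) * I1 with hcdef
  have hc0 : 0 ≤ c := mul_nonneg (by positivity) hI1nn
  have hkeyR : c * Real.sqrt (Real.pi / (((n:ℝ)+1)/2)) ≤ I1 := by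
    have h1 : Real.sqrt (Real.pi / (((n:ℝ)+1)/2)) =
        Real.sqrt (2*Real.pi) / Real.sqrt ((n:ℝ)+1) := by
      rw [show Real.pi / (((n:ℝ)+1)/2) = (2*Real.pi) / ((n:ℝ)+1) by field_simp,
        Real.sqrt_div (by positivity)]
    have h2 : Real.sqrt (((n:ℝ)+2)) ≤ 2 * Real.sqrt ((n:ℝ)+1) := by
      have h3 : (2:ℝ) * Real.sqrt ((n:ℝ)+1) = Real.sqrt (4*((n:ℝ)+1)) := by
        rw [show (4:ℝ)*((n:ℝ)+1) = 2^2*((n:ℝ)+1) by ring, Real.sqrt_mul (by positivity),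
          Real.sqrt_sq (by norm_num)]
      rw [h3]
      apply Real.sqrt_le_sqrt
      have : (0:ℝ) ≤ (n:ℝ) := Nat.cast_nonneg n
      linarith
    have hcoeff : Real.sqrt ((n+2 : ℕ) : ℝ) / (2 * Real.sqrt (2*Real.pi)) *
        Real.sqrt (Real.pi / (((n:ℝ)+1)/2)) ≤ 1 := by
      rw [h1, div_mul_div_comm, div_le_one (by positivity)]
      calc Real.sqrt ((n+2 : ℕ) : ℝ) * Real.sqrt (2*Real.pi)
          ≤ (2*Real.sqrt ((n:ℝ)+1)) * Real.sqrt (2*Real.pi) := by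
            apply mul_le_mul_of_nonneg_right _ (Real.sqrt_nonneg _)
            rw [show (((n+2 : ℕ)) : ℝ) = (n:ℝ)+2 by push_cast; ring]
            exact h2
        _ = 2 * Real.sqrt (2*Real.pi) * Real.sqrt ((n:ℝ)+1) := by ring
    calc c * Real.sqrt (Real.pi / (((n:ℝ)+1)/2))
        = (Real.sqrt ((n+2 : ℕ) : ℝ) / (2 * Real.sqrt (2*Real.pi)) *
            Real.sqrt (Real.pi / (((n:ℝ)+1)/2))) * I1 := by rw [hcdef]; ring
      _ ≤ 1 * I1 := mul_le_mul_of_nonneg_right hcoeff hI1nn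
      _ = I1 := one_mul I1
  -- final ENNReal combination
  have hSu0 : (volume : Measure E).toSphere (univ : Set (sphere (0:E) 1)) ≠ 0 := by
    rw [hSuniv]
    exact mul_ne_zero (by simp) (measure_ball_pos _ _ one_pos).ne'
  have hSuT : (volume : Measure E).toSphere (univ : Set (sphere (0:E) 1)) ≠ ⊤ := by
    rw [hSuniv]
    exact ENNReal.mul_ne_top (ENNReal.natCast_ne_top _) measure_ball_lt_top.ne
  have hkey : ENNReal.ofReal c * (volume : Measure E).toSphere univ ≤
      (volume : Measure E).toSphere cap := by
    refine le_trans ?_ hScap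
    rw [hSuniv, hvolB, hvolA]
    calc ENNReal.ofReal c * (((n+2 : ℕ) : ℝ≥0∞) * ((∫⁻ s : ℝ, ENNReal.ofReal (g s)) * B))
        = ((n+2 : ℕ) : ℝ≥0∞) * ((ENNReal.ofReal c * (∫⁻ s : ℝ, ENNReal.ofReal (g s))) * B) := by
          ring
      _ ≤ ((n+2 : ℕ) : ℝ≥0∞) * ((ENNReal.ofReal c *
            ENNReal.ofReal (Real.sqrt (Real.pi / (((n:ℝ)+1)/2)))) * B) :=
          mul_le_mul_right (mul_le_mul_left (mul_le_mul_right hL2 _) B) _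
      _ = ((n+2 : ℕ) : ℝ≥0∞) *
            ((ENNReal.ofReal (c * Real.sqrt (Real.pi / (((n:ℝ)+1)/2)))) * B) := by
          rw [ENNReal.ofReal_mul hc0]
      _ ≤ ((n+2 : ℕ) : ℝ≥0∞) * (ENNReal.ofReal I1 * B) :=
          mul_le_mul_right (mul_le_mul_left (ENNReal.ofReal_le_ofReal hkeyR) B) _
      _ ≤ ((n+2 : ℕ) : ℝ≥0∞) * ((∫⁻ s in Ici t, ENNReal.ofReal (g s)) * B) :=
          mul_le_mul_right (mul_le_mul_left hI1L1 B) _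
  have hdivle : ENNReal.ofReal c ≤
      (volume : Measure E).toSphere cap / (volume : Measure E).toSphere univ :=
    (ENNReal.le_div_iff_mul_le (Or.inl hSu0) (Or.inl hSuT)).2 hkey
  have hfin : (volume : Measure E).toSphere cap / (volume : Measure E).toSphere univ ≠ ⊤ :=
    (ENNReal.div_lt_top (measure_ne_top _ _) hSu0).ne
  have hgoal : capSigma (n+2) t (EuclideanSpace.single (⟨0, by omega⟩ : Fin (n+2)) 1) =
      ((volume : Measure E).toSphere cap / (volume : Measure E).toSphere univ).toReal := rfl
  rw [hgoal]
  calc c = (ENNReal.ofReal c).toReal := (ENNReal.toReal_ofReal hc0).symm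
    _ ≤ _ := ENNReal.toReal_mono hfin hdivle
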